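/- Let f ∈ ℤ[x] be monic of degree n with n distinct roots α_1,…,α_n in a fixed algebraic closure K of ℚ, and let L = ℚ(α_1,…,α_n). Let H ≤ G ≤ Sym(n), assume p(τ) ∈ G for all τ ∈ Gal(L/ℚ), let F ∈ ℤ[X_1,…,X_n] be H-invariant, and let R_F(T) := ∏_{σ ∈ G//H} (T − F^σ(α_1,…,α_n)). Assume R_F is squarefree and that for some σ ∈ G the value F^σ(α_1,…,α_n) lies in ℤ (so T − F^σ(α) is a linear factor of R_F in ℤ[T]). Then Gal(f) ≤ σ^{-1} H σ; i.e., p(τ) ∈ σ^{-1} H σ for every τ ∈ Gal(L/ℚ). -/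

import Mathlib

/-
A rational integer is fixed by every `τ ∈ Gal(L/ℚ)`, while `τ` sends `F^σ(α)` to
`F^{σ p(τ)⁻¹}(α)`. Both values are roots of `R_F`, which is squarefree, so `σ` and
`σ p(τ)⁻¹` have the same coset representative, i.e. they lie in the same right coset of `H`;
this says exactly that `σ p(τ) σ⁻¹ ∈ H`.
-/

open MvPolynomial Polynomial

/-- The (right) action `F ↦ F^σ` of `Sym(n)` on multivariate polynomials by permuting
the variables.  It satisfies `(F^σ)^τ = F^{στ}`, so that `F^σ` depends only on the
*right* coset `Hσ` when `F` is `H`-invariant, as in the paper; up to the substitution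
`σ ↦ σ⁻¹` it is the action `X_i ↦ X_{σ(i)}`. -/
noncomputable def permAct {n : ℕ} (σ : Equiv.Perm (Fin n))
    (F : MvPolynomial (Fin n) ℤ) : MvPolynomial (Fin n) ℤ :=
  rename (⇑σ⁻¹) F

theorem Polynomial.injOn_of_squarefree_prod_X_sub_C {ι R : Type*} [DecidableEq ι] [CommRing R]
    [Nontrivial R] {s : Finset ι} {v : ι → R} (h : Squarefree (∏ i ∈ s, (X - C (v i)))) :
    Set.InjOn v s := by
  intro i hi j hj hij
  by_contra hne
  have hdvd : (X - C (v i)) * (X - C (v i)) ∣ ∏ k ∈ s, (X - C (v k)) := by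
    have hpair := Finset.prod_dvd_prod_of_subset {i, j} s (fun k => X - C (v k))
      (Finset.insert_subset hi (Finset.singleton_subset_iff.mpr hj))
    rwa [Finset.prod_pair hne, ← hij] at hpair
  exact not_isUnit_X_sub_C (v i) (h _ hdvd)

theorem Subgroup.mul_inv_mem_of_apply_eq {Γ X : Type*} [Group Γ] {G H : Subgroup Γ}
    {R : Set Γ} {v : Γ → X} (hv : ∀ h ∈ H, ∀ g, v (h * g) = v g) (hinj : Set.InjOn v R)
    (hreps : ∀ g ∈ G, ∃ r ∈ R, g * r⁻¹ ∈ H) {g₁ g₂ : Γ} (hg₁ : g₁ ∈ G) (hg₂ : g₂ ∈ G)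
    (heq : v g₁ = v g₂) : g₁ * g₂⁻¹ ∈ H := by
  obtain ⟨r₁, hr₁R, hr₁H⟩ := hreps g₁ hg₁
  obtain ⟨r₂, hr₂R, hr₂H⟩ := hreps g₂ hg₂
  have hv_rep : ∀ g r, g * r⁻¹ ∈ H → v g = v r := fun g r hgr => by
    simpa using hv _ hgr r
  have hr : r₁ = r₂ := hinj hr₁R hr₂R <| by
    rw [← hv_rep g₁ r₁ hr₁H, ← hv_rep g₂ r₂ hr₂H, heq]
  subst hr
  simpa [mul_assoc] using H.mul_mem hr₁H (H.inv_mem hr₂H)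

section permAct

variable {n : ℕ}

theorem permAct_mul (σ τ : Equiv.Perm (Fin n)) (F : MvPolynomial (Fin n) ℤ) :
    permAct (σ * τ) F = permAct τ (permAct σ F) := by
  rw [permAct, permAct, permAct, mul_inv_rev, Equiv.Perm.coe_mul, rename_rename]

theorem permAct_mul_of_forall_mem {H : Subgroup (Equiv.Perm (Fin n))}
    {F : MvPolynomial (Fin n) ℤ} (hF : ∀ h ∈ H, permAct h F = F) {h : Equiv.Perm (Fin n)}
    (hh : h ∈ H) (g : Equiv.Perm (Fin n)) : permAct (h * g) F = permAct g F := by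
  rw [permAct_mul, hF h hh]

theorem map_aeval_permAct {A : Type*} [CommRing A] (φ : A →+* A) (x : Fin n → A)
    (π : Equiv.Perm (Fin n)) (hφ : ∀ i, φ (x i) = x (π i)) (g : Equiv.Perm (Fin n))
    (F : MvPolynomial (Fin n) ℤ) :
    φ (aeval x (permAct g F)) = aeval x (permAct (g * π⁻¹) F) := by
  change φ.toIntAlgHom _ = _
  rw [permAct, permAct, aeval_rename, aeval_rename, comp_aeval_apply]
  congr 1
  ext i
  simp [hφ, mul_inv_rev]

end permAct

theorem statement17_general (n : ℕ) (K : Type*) [Field K] [Algebra ℚ K]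
    (L : IntermediateField ℚ K)
    (αL : Fin n → ↥L)
    (G H : Subgroup (Equiv.Perm (Fin n)))
    (p : (↥L ≃ₐ[ℚ] ↥L) → Equiv.Perm (Fin n))
    (hp : ∀ (τ : ↥L ≃ₐ[ℚ] ↥L) (i : Fin n), τ (αL i) = αL (p τ i))
    (hGal : ∀ τ : ↥L ≃ₐ[ℚ] ↥L, p τ ∈ G)
    (F : MvPolynomial (Fin n) ℤ)
    (hF : ∀ h ∈ H, permAct h F = F)
    (R : Finset (Equiv.Perm (Fin n)))
    (hreps : ∀ g ∈ G, ∃! r, r ∈ R ∧ g * r⁻¹ ∈ H)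
    (hsqf : Squarefree (∏ r ∈ R, (Polynomial.X -
        Polynomial.C (MvPolynomial.aeval αL (permAct r F) : ↥L))))
    (σ : Equiv.Perm (Fin n)) (hσG : σ ∈ G)
    (θ : ℤ) (hθ : (MvPolynomial.aeval αL (permAct σ F) : ↥L) = algebraMap ℤ ↥L θ) :
    ∀ τ : ↥L ≃ₐ[ℚ] ↥L, σ * p τ * σ⁻¹ ∈ H := by
  intro τ
  have hτ : τ (aeval αL (permAct σ F)) = aeval αL (permAct (σ * (p τ)⁻¹) F) :=
    map_aeval_permAct (τ : ↥L →+* ↥L) αL (p τ) (hp τ) σ F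
  have hfix : τ (aeval αL (permAct σ F)) = aeval αL (permAct σ F) := by
    rw [hθ, eq_intCast, map_intCast]
  have hmem := Subgroup.mul_inv_mem_of_apply_eq (G := G) (R := R)
    (v := fun g => aeval αL (permAct g F))
    (fun h hh g => congrArg (MvPolynomial.aeval αL) (permAct_mul_of_forall_mem hF hh g))
    (injOn_of_squarefree_prod_X_sub_C hsqf) (fun g hg => (hreps g hg).exists)
    hσG (G.mul_mem hσG (G.inv_mem (hGal τ))) (hfix.symm.trans hτ)
  rwa [mul_inv_rev, inv_inv, ← mul_assoc] at hmem

/-- Corollary: linear factor of the resolvent.  In the resolvent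
setting (monic `f ∈ ℤ[x]` with distinct roots `α_1,…,α_n` in an algebraic closure `K`
of `ℚ`, splitting field `L`, `H ≤ G ≤ Sym(n)` with `Gal(f) ≤ G`, `F` an `H`-invariant
polynomial, `R_F(T) = ∏_{σ ∈ G//H}(T − F^σ(α))`), assume `R_F` is squarefree and that
for some `σ ∈ G` the value `F^σ(α_1,…,α_n)` is a rational integer `θ` (so
`T − F^σ(α)` is a linear factor of `R_F` in `ℤ[T]`).  Then `Gal(f) ≤ σ⁻¹Hσ`, i.e.
`p(τ) ∈ σ⁻¹Hσ` (equivalently `σ·p(τ)·σ⁻¹ ∈ H`) for every `τ ∈ Gal(L/ℚ)`. -/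
theorem statement17 (n : ℕ) (K : Type*) [Field K] [Algebra ℚ K] [IsAlgClosure ℚ K]
    (f : Polynomial ℤ) (hmonic : f.Monic) (hdeg : f.natDegree = n)
    (α : Fin n → K) (hinj : Function.Injective α)
    (hroots : f.map (algebraMap ℤ K) = ∏ i : Fin n, (Polynomial.X - Polynomial.C (α i)))
    (L : IntermediateField ℚ K) (hL : L = IntermediateField.adjoin ℚ (Set.range α))
    (αL : Fin n → ↥L) (hαL : ∀ i, (αL i : K) = α i)
    (G H : Subgroup (Equiv.Perm (Fin n))) (hHG : H ≤ G)
    (p : (↥L ≃ₐ[ℚ] ↥L) → Equiv.Perm (Fin n))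
    (hp : ∀ (τ : ↥L ≃ₐ[ℚ] ↥L) (i : Fin n), τ (αL i) = αL (p τ i))
    (hGal : ∀ τ : ↥L ≃ₐ[ℚ] ↥L, p τ ∈ G)
    (F : MvPolynomial (Fin n) ℤ)
    (hF : ∀ h ∈ H, permAct h F = F)
    (R : Finset (Equiv.Perm (Fin n)))
    (hRG : ∀ r ∈ R, r ∈ G)
    (hreps : ∀ g ∈ G, ∃! r, r ∈ R ∧ g * r⁻¹ ∈ H)
    (hsqf : Squarefree (∏ r ∈ R, (Polynomial.X -
        Polynomial.C (MvPolynomial.aeval αL (permAct r F) : ↥L))))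
    (σ : Equiv.Perm (Fin n)) (hσG : σ ∈ G)
    (θ : ℤ) (hθ : (MvPolynomial.aeval αL (permAct σ F) : ↥L) = algebraMap ℤ ↥L θ) :
    ∀ τ : ↥L ≃ₐ[ℚ] ↥L, σ * p τ * σ⁻¹ ∈ H :=
  statement17_general n K L αL G H p hp hGal F hF R hreps hsqf σ hσG θ hθ
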